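/- Let μ be a nonzero real number and let P be a real polynomial without harmonic terms which is not identically zero, say P(z) = Σ_{j,q≥1} c_{j,q} z^j (conj z)^q, and write P_z(z) = Σ_{j,q≥1} j·c_{j,q} z^{j−1} (conj z)^q for its derivative in z. Then there do not exist entire functions h₁, h₂ : ℂ → ℂ with h₁ nowhere vanishing such that for all z ∈ ℂ: (h₁(z)·P_z(z) + h₂(z)) + exp(−2·i·μ·P(z)) · conj( h₁(z)·P_z(z) + h₂(z) ) = 0. Equivalently: if entire functions h₁, h₂ satisfy this identity for all z ∈ ℂ, then h₁ must vanish somewhere in ℂ. -/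

import Mathlib

/-!
Polarize: with `F(z, w) = ∑ c j q * z ^ j * w ^ q`, so that `P z = F(z, conj z)`, the tangency
identity (with `κ = 2iμ`) is the restriction to the totally real diagonal `w = conj z` of a
holomorphic identity in `(z, w)`, which therefore holds on all of `ℂ²`. Differentiating it in `w`
eliminates `h₂` and shows that `h₁(z) e^{κ F(z, w)} F_{zw}(z, w)` is a polynomial in `z`. A nowhere
vanishing entire function whose product with a nonzero polynomial is a polynomial is constant, so
`h₁' + κ h₁ F_z(·, w) = 0` whenever `F_{zw}(·, w) ≢ 0`. Hence `F_z(z, ·)` is locally constant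
near every point where `F_{zw} ≠ 0`, which is absurd; so `F_{zw} ≡ 0`, and since `P` has no
harmonic terms this forces `F ≡ 0`, i.e. `P ≡ 0`.
-/

open Complex ComplexConjugate Finset Polynomial Filter Topology

theorem Continuous.eq_eval_divByMonic_of_mul_sub {f : ℂ → ℂ} (hf : Continuous f) {a : ℂ}
    {q : ℂ[X]} (h : ∀ z, f z * (z - a) = q.eval z) (z : ℂ) :
    f z = (q /ₘ (X - C a)).eval z := by
  have hq : (X - C a) * (q /ₘ (X - C a)) = q :=
    mul_divByMonic_eq_iff_isRoot.2 (by simpa using (h a).symm)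
  refine congrFun (hf.ext_on (dense_compl_singleton a) (Polynomial.continuous _) ?_) z
  intro x (hx : x ≠ a)
  refine mul_right_cancel₀ (sub_ne_zero.2 hx) ?_
  have hqx := congrArg (eval x) hq
  rw [eval_mul] at hqx
  simp only [eval_sub, eval_X, eval_C] at hqx
  rw [h, ← hqx, mul_comm]

theorem Continuous.exists_eq_eval_of_mul_prod {f : ℂ → ℂ} (hf : Continuous f) (s : Multiset ℂ)
    {q : ℂ[X]} (h : ∀ z, f z * ((s.map fun a => X - C a).prod).eval z = q.eval z) :
    ∃ r : ℂ[X], ∀ z, f z = r.eval z := by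
  induction s using Multiset.induction_on generalizing f q with
  | empty => exact ⟨q, by simpa using h⟩
  | cons a s ih =>
    set p := (s.map fun a => X - C a).prod
    have hg : Continuous fun z => f z * p.eval z := hf.mul (Polynomial.continuous p)
    refine ih hf (q := q /ₘ (X - C a)) (hg.eq_eval_divByMonic_of_mul_sub fun z => ?_)
    simpa [p, mul_comm, mul_left_comm, mul_assoc] using h z

theorem Continuous.exists_eq_eval_of_mul_eval_eq {f : ℂ → ℂ} (hf : Continuous f) {p q : ℂ[X]}
    (hp : p ≠ 0) (h : ∀ z, f z * p.eval z = q.eval z) : ∃ r : ℂ[X], ∀ z, f z = r.eval z := by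
  have hsplit :=
    C_leadingCoeff_mul_prod_multiset_X_sub_C (IsAlgClosed.card_roots_eq_natDegree (p := p))
  have hlc : p.leadingCoeff ≠ 0 := leadingCoeff_ne_zero.2 hp
  refine hf.exists_eq_eval_of_mul_prod p.roots (q := C p.leadingCoeff⁻¹ * q) fun z => ?_
  have hpz := congrArg (eval z) hsplit
  rw [eval_mul, eval_C] at hpz
  rw [eval_mul, eval_C, ← h, ← hpz]
  field_simp

theorem Continuous.eq_const_of_mul_eval_eq {f : ℂ → ℂ} (hf : Continuous f) (hf0 : ∀ z, f z ≠ 0)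
    {p q : ℂ[X]} (hp : p ≠ 0) (h : ∀ z, f z * p.eval z = q.eval z) (z : ℂ) : f z = f 0 := by
  obtain ⟨r, hr⟩ := hf.exists_eq_eval_of_mul_eval_eq hp h
  have hdeg : r.degree ≤ 0 := by
    by_contra! hpos
    obtain ⟨x, hx⟩ := Complex.exists_root hpos
    exact hf0 x ((hr x).trans hx)
  rw [hr, hr, eq_C_of_degree_le_zero hdeg, eval_C, eval_C]

theorem Differentiable.eq_zero_of_forall_ofReal {f : ℂ → ℂ} (hf : Differentiable ℂ f)
    (h : ∀ x : ℝ, f x = 0) (z : ℂ) : f z = 0 := by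
  have hfreq : ∃ᶠ w in 𝓝[≠] (0 : ℂ), f w = 0 := by
    have hmaps : Tendsto ((↑) : ℝ → ℂ) (𝓝[≠] 0) (𝓝[≠] 0) :=
      continuous_ofReal.continuousWithinAt.tendsto_nhdsWithin fun x hx => by simpa using hx
    exact hmaps.frequently (Frequently.of_forall h)
  exact AnalyticOnNhd.eqOn_zero_of_preconnected_of_frequently_eq_zero (fun w _ => hf.analyticAt w)
    isPreconnected_univ (Set.mem_univ 0) hfreq (Set.mem_univ z)

theorem Differentiable.eq_zero_of_forall_apply_conj {Φ : ℂ × ℂ → ℂ} (hΦ : Differentiable ℂ Φ)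
    (h : ∀ z, Φ (z, conj z) = 0) (z w : ℂ) : Φ (z, w) = 0 := by
  -- `(u, v) ↦ Φ (u + I * v, u - I * v)` vanishes on `ℝ²`; extend off `ℝ` one variable at a time
  have hreal : ∀ (y : ℝ) (u : ℂ), Φ (u + I * y, u - I * y) = 0 := fun y =>
    Differentiable.eq_zero_of_forall_ofReal (by fun_prop) fun x => by
      simpa [sub_eq_add_neg] using h (x + I * y)
  have hall : ∀ u v : ℂ, Φ (u + I * v, u - I * v) = 0 := fun u =>
    Differentiable.eq_zero_of_forall_ofReal (by fun_prop) fun y => hreal y u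
  have := hall ((z + w) / 2) ((z - w) / (2 * I))
  convert this using 3 <;> field_simp <;> ring

theorem Differentiable.conj_comp_conj {f : ℂ → ℂ} (hf : Differentiable ℂ f) :
    Differentiable ℂ fun z => conj (f (conj z)) := fun z => by
  simpa [Function.comp_def] using (hf (conj z)).conj_conj

noncomputable def bipoly (a : ℕ → ℕ → ℂ) (m n : ℕ) (z w : ℂ) : ℂ :=
  ∑ j ∈ range m, ∑ q ∈ range n, a j q * z ^ j * w ^ q

def coeffDz (a : ℕ → ℕ → ℂ) (j q : ℕ) : ℂ := (j + 1 : ℂ) * a (j + 1) q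

def coeffDw (a : ℕ → ℕ → ℂ) (j q : ℕ) : ℂ := (q + 1 : ℂ) * a j (q + 1)

noncomputable def bipolySlice (a : ℕ → ℕ → ℂ) (m n : ℕ) (w : ℂ) : ℂ[X] :=
  ∑ j ∈ range m, C (∑ q ∈ range n, a j q * w ^ q) * X ^ j

section Bipoly

variable (a : ℕ → ℕ → ℂ) (m n : ℕ)

theorem bipoly_eq_eval_bipolySlice (z w : ℂ) :
    bipoly a m n z w = (bipolySlice a m n w).eval z := by
  simp only [bipoly, bipolySlice, eval_finsetSum, eval_mul, eval_C, eval_pow, eval_X, sum_mul]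
  exact sum_congr rfl fun j _ => sum_congr rfl fun q _ => by ring

theorem bipoly_transpose (z w : ℂ) : bipoly (fun j q => a q j) n m w z = bipoly a m n z w := by
  rw [bipoly, sum_comm]
  exact sum_congr rfl fun j _ => sum_congr rfl fun q _ => by ring

theorem bipoly_conjTranspose (z w : ℂ) :
    bipoly (fun j q => conj (a q j)) n m z w = conj (bipoly a m n (conj w) (conj z)) := by
  simp only [bipoly, map_sum, map_mul, map_pow, conj_conj]
  rw [sum_comm]
  exact sum_congr rfl fun j _ => sum_congr rfl fun q _ => by ring

theorem bipoly_coeffDz (z w : ℂ) : bipoly (coeffDz a) (m - 1) n z w =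
    ∑ j ∈ range m, ∑ q ∈ range n, (j : ℂ) * a j q * z ^ (j - 1) * w ^ q := by
  cases m with
  | zero => simp [bipoly]
  | succ m =>
    rw [sum_range_succ']
    simp [bipoly, coeffDz, mul_assoc]

theorem hasDerivAt_bipoly_left (z w : ℂ) :
    HasDerivAt (bipoly a m n · w) (bipoly (coeffDz a) (m - 1) n z w) z := by
  rw [bipoly_coeffDz]
  refine HasDerivAt.fun_sum fun j _ => HasDerivAt.fun_sum fun q _ => ?_
  exact (((hasDerivAt_pow j z).const_mul (a j q)).mul_const (w ^ q)).congr_deriv (by ring)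

theorem hasDerivAt_bipoly_right (z w : ℂ) :
    HasDerivAt (bipoly a m n z) (bipoly (coeffDw a) m (n - 1) z w) w := by
  have h := hasDerivAt_bipoly_left (fun j q => a q j) n m w z
  rw [show (fun x => bipoly (fun j q => a q j) n m x z) = bipoly a m n z from
    funext fun x => bipoly_transpose a m n z x] at h
  exact h.congr_deriv (bipoly_transpose (coeffDw a) m (n - 1) z w)

theorem differentiable_bipoly : Differentiable ℂ fun p : ℂ × ℂ => bipoly a m n p.1 p.2 := by
  unfold bipoly; fun_prop

theorem bipoly_zero_left (ha : ∀ q, a 0 q = 0) (w : ℂ) : bipoly a m n 0 w = 0 :=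
  sum_eq_zero fun j _ => sum_eq_zero fun q _ => by
    rcases j with _ | j <;> simp [ha]

theorem bipoly_zero_right (ha : ∀ j, a j 0 = 0) (z : ℂ) : bipoly a m n z 0 = 0 := by
  rw [← bipoly_transpose]
  exact bipoly_zero_left _ _ _ ha z

theorem bipoly_eq_zero_of_coeffDw_coeffDz (ha₀ : ∀ q, a 0 q = 0) (ha₀' : ∀ j, a j 0 = 0)
    (h : ∀ z w, bipoly (coeffDw (coeffDz a)) (m - 1) (n - 1) z w = 0) (z w : ℂ) :
    bipoly a m n z w = 0 := by
  have hdz : ∀ z w, bipoly (coeffDz a) (m - 1) n z w = 0 := fun z w => by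
    have hd := hasDerivAt_bipoly_right (coeffDz a) (m - 1) n z
    rw [is_const_of_deriv_eq_zero (fun w => (hd w).differentiableAt)
      (fun w => (hd w).deriv.trans (h z w)) w 0]
    exact bipoly_zero_right _ _ _ (fun j => by simp [coeffDz, ha₀']) z
  have hd := fun z => hasDerivAt_bipoly_left a m n z w
  rw [is_const_of_deriv_eq_zero (fun z => (hd z).differentiableAt)
    (fun z => (hd z).deriv.trans (hdz z w)) z 0]
  exact bipoly_zero_left _ _ _ ha₀ w

end Bipoly

/-- At `w = conj z` this is `exp (κ P) * (A + exp (-κ P) * conj A)` with `A = h₁ P_z + h₂`. -/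
noncomputable def tangencyPolar (a : ℕ → ℕ → ℂ) (m n : ℕ) (κ : ℂ) (h₁ h₂ : ℂ → ℂ) (z w : ℂ) :
    ℂ :=
  exp (κ * bipoly a m n z w) * (h₁ z * bipoly (coeffDz a) (m - 1) n z w + h₂ z) +
    conj (h₁ (conj w)) * bipoly (fun j q => conj (coeffDz a q j)) n (m - 1) z w + conj (h₂ (conj w))

section Tangency

variable {a : ℕ → ℕ → ℂ} {m n : ℕ} {κ : ℂ} {h₁ h₂ : ℂ → ℂ}

theorem tangencyPolar_eq_zero (hh₁ : Differentiable ℂ h₁) (hh₂ : Differentiable ℂ h₂)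
    (heq : ∀ z, (h₁ z * bipoly (coeffDz a) (m - 1) n z (conj z) + h₂ z) +
      exp (-κ * bipoly a m n z (conj z)) *
        conj (h₁ z * bipoly (coeffDz a) (m - 1) n z (conj z) + h₂ z) = 0) (z w : ℂ) :
    tangencyPolar a m n κ h₁ h₂ z w = 0 := by
  refine Differentiable.eq_zero_of_forall_apply_conj
    (Φ := fun p => tangencyPolar a m n κ h₁ h₂ p.1 p.2) ?_ (fun z => ?_) z w
  · have : Differentiable ℂ fun p : ℂ × ℂ => conj (h₁ (conj p.2)) :=
      hh₁.conj_comp_conj.comp differentiable_snd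
    have : Differentiable ℂ fun p : ℂ × ℂ => conj (h₂ (conj p.2)) :=
      hh₂.conj_comp_conj.comp differentiable_snd
    have := differentiable_bipoly a m n
    have := differentiable_bipoly (coeffDz a) (m - 1) n
    have := differentiable_bipoly (fun j q => conj (coeffDz a q j)) n (m - 1)
    unfold tangencyPolar
    fun_prop
  · simp only [tangencyPolar, conj_conj, bipoly_conjTranspose]
    have hexp : exp (κ * bipoly a m n z (conj z)) * exp (-κ * bipoly a m n z (conj z)) = 1 := by
      rw [← exp_add, neg_mul, add_neg_cancel, exp_zero]
    have hz := heq z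
    simp only [map_add, map_mul] at hz ⊢
    linear_combination exp (κ * bipoly a m n z (conj z)) * hz -
      (conj (h₁ z) * conj (bipoly (coeffDz a) (m - 1) n z (conj z)) + conj (h₂ z)) * hexp

theorem mul_exp_bipoly_eq_const (hh₁ : Differentiable ℂ h₁) (hh₂ : Differentiable ℂ h₂)
    (hne : ∀ z, h₁ z ≠ 0) (hpol : ∀ z w, tangencyPolar a m n κ h₁ h₂ z w = 0) {w : ℂ}
    (hw : ∃ z, bipoly (coeffDw (coeffDz a)) (m - 1) (n - 1) z w ≠ 0) (z : ℂ) :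
    h₁ z * exp (κ * bipoly a m n z w) = h₁ 0 * exp (κ * bipoly a m n 0 w) := by
  set b : ℕ → ℕ → ℂ := fun j q => conj (coeffDz a q j)
  set H₁ : ℂ → ℂ := fun w => conj (h₁ (conj w))
  set H₂ : ℂ → ℂ := fun w => conj (h₂ (conj w))
  -- differentiating the polarized identity in `w` removes `h₂` and leaves a polynomial in `z`
  have hpoly : ∀ z, h₁ z * exp (κ * bipoly a m n z w) *
      bipoly (coeffDw (coeffDz a)) (m - 1) (n - 1) z w =
      κ * bipoly (coeffDw a) m (n - 1) z w * (H₁ w * bipoly b n (m - 1) z w + H₂ w) -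
        deriv H₁ w * bipoly b n (m - 1) z w - H₁ w * bipoly (coeffDw b) n (m - 1 - 1) z w -
        deriv H₂ w := by
    intro z
    have hd := ((((hasDerivAt_bipoly_right a m n z w).const_mul κ).cexp.mul
      (((hasDerivAt_bipoly_right (coeffDz a) (m - 1) n z w).const_mul (h₁ z)).add_const
        (h₂ z))).add ((hh₁.conj_comp_conj w).hasDerivAt.mul
          (hasDerivAt_bipoly_right b n (m - 1) z w))).add (hh₂.conj_comp_conj w).hasDerivAt
    have h0 := hd.unique ((hasDerivAt_const w 0).congr_of_eventuallyEq
      (Eventually.of_forall fun w => hpol z w))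
    have hzw := hpol z w
    unfold tangencyPolar at hzw
    linear_combination h0 - κ * bipoly (coeffDw a) m (n - 1) z w * hzw
  refine Continuous.eq_const_of_mul_eval_eq (f := fun z => h₁ z * exp (κ * bipoly a m n z w)) ?_
    (fun z => mul_ne_zero (hne z) (exp_ne_zero _))
    (p := bipolySlice (coeffDw (coeffDz a)) (m - 1) (n - 1) w)
    (q := C κ * bipolySlice (coeffDw a) m (n - 1) w * (C (H₁ w) * bipolySlice b n (m - 1) w +
      C (H₂ w)) - C (deriv H₁ w) * bipolySlice b n (m - 1) w -
      C (H₁ w) * bipolySlice (coeffDw b) n (m - 1 - 1) w - C (deriv H₂ w)) ?_ (fun z => ?_) z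
  · have := hh₁.continuous
    unfold bipoly
    fun_prop
  · obtain ⟨z, hz⟩ := hw
    intro h0
    rw [bipoly_eq_eval_bipolySlice, h0, eval_zero] at hz
    exact hz rfl
  · simpa only [eval_mul, eval_add, eval_sub, eval_C, ← bipoly_eq_eval_bipolySlice] using hpoly z

theorem deriv_add_mul_bipoly_eq_zero (hh₁ : Differentiable ℂ h₁) (hh₂ : Differentiable ℂ h₂)
    (hne : ∀ z, h₁ z ≠ 0) (hpol : ∀ z w, tangencyPolar a m n κ h₁ h₂ z w = 0) {w : ℂ}
    (hw : ∃ z, bipoly (coeffDw (coeffDz a)) (m - 1) (n - 1) z w ≠ 0) (z : ℂ) :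
    deriv h₁ z + κ * h₁ z * bipoly (coeffDz a) (m - 1) n z w = 0 := by
  have hd := (hh₁ z).hasDerivAt.mul ((hasDerivAt_bipoly_left a m n z w).const_mul κ).cexp
  have h0 := hd.unique ((hasDerivAt_const z _).congr_of_eventuallyEq
    (Eventually.of_forall (mul_exp_bipoly_eq_const hh₁ hh₂ hne hpol hw)))
  refine (mul_eq_zero.1 ?_).resolve_left (exp_ne_zero (κ * bipoly a m n z w))
  linear_combination h0

theorem bipoly_coeffDw_coeffDz_eq_zero (hκ : κ ≠ 0) (hh₁ : Differentiable ℂ h₁)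
    (hh₂ : Differentiable ℂ h₂) (hne : ∀ z, h₁ z ≠ 0)
    (hpol : ∀ z w, tangencyPolar a m n κ h₁ h₂ z w = 0) (z w : ℂ) :
    bipoly (coeffDw (coeffDz a)) (m - 1) (n - 1) z w = 0 := by
  by_contra h
  have hnear : ∀ᶠ w' in 𝓝 w, κ * h₁ z * bipoly (coeffDz a) (m - 1) n z w' = -deriv h₁ z := by
    have hcont : Continuous (bipoly (coeffDw (coeffDz a)) (m - 1) (n - 1) z) := by
      unfold bipoly; fun_prop
    filter_upwards [hcont.continuousAt.eventually_ne h] with w' hw'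
    linear_combination deriv_add_mul_bipoly_eq_zero hh₁ hh₂ hne hpol ⟨z, hw'⟩ z
  have h0 := ((hasDerivAt_bipoly_right (coeffDz a) (m - 1) n z w).const_mul (κ * h₁ z)).unique
    ((hasDerivAt_const w (-deriv h₁ z)).congr_of_eventuallyEq hnear)
  exact mul_ne_zero (mul_ne_zero hκ (hne z)) h h0

end Tangency

theorem stmt11_general (μ : ℝ) (hμ : μ ≠ 0) (c : ℕ → ℕ → ℂ) (N : ℕ) (P : ℂ → ℝ) (Pz : ℂ → ℂ)
    (hharm : ∀ j q, j = 0 ∨ q = 0 → c j q = 0)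
    (hP : ∀ z : ℂ, (P z : ℂ) = ∑ j ∈ Finset.range (N + 1), ∑ q ∈ Finset.range (N + 1),
      c j q * z ^ j * (conj z) ^ q)
    (hPz : ∀ z : ℂ, Pz z = ∑ j ∈ Finset.range (N + 1), ∑ q ∈ Finset.range (N + 1),
      (j : ℂ) * c j q * z ^ (j - 1) * (conj z) ^ q)
    (hPne : ∃ z : ℂ, P z ≠ 0)
    (h₁ h₂ : ℂ → ℂ) (hh₁ : Differentiable ℂ h₁) (hh₂ : Differentiable ℂ h₂)
    (heq : ∀ z : ℂ, (h₁ z * Pz z + h₂ z) +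
      Complex.exp (-2 * Complex.I * μ * P z) * conj (h₁ z * Pz z + h₂ z) = 0) :
    ∃ z : ℂ, h₁ z = 0 := by
  by_contra! hne
  have hP' (z : ℂ) : (P z : ℂ) = bipoly c (N + 1) (N + 1) z (conj z) := hP z
  have hPz' (z : ℂ) : Pz z = bipoly (coeffDz c) (N + 1 - 1) (N + 1) z (conj z) :=
    (hPz z).trans (bipoly_coeffDz c _ _ z (conj z)).symm
  have hpol := tangencyPolar_eq_zero (κ := 2 * I * μ) hh₁ hh₂ fun z => by
    rw [← hP', ← hPz']
    convert heq z using 4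
    ring
  have hκ : (2 * I * μ : ℂ) ≠ 0 := by simp [hμ]
  obtain ⟨z, hz⟩ := hPne
  refine hz (ofReal_eq_zero.1 ((hP' z).trans ?_))
  exact bipoly_eq_zero_of_coeffDw_coeffDz c _ _ (fun q => hharm 0 q (Or.inl rfl))
    (fun j => hharm j 0 (Or.inr rfl)) (bipoly_coeffDw_coeffDz_eq_zero hκ hh₁ hh₂ hne hpol) _ _

/-- if `μ ≠ 0` is real, `P` is a nonzero real polynomial without harmonic
terms with `z`-derivative `P_z`, and entire functions `h₁, h₂` satisfy the tangency
identity `(h₁ P_z + h₂) + e^{−2iμP} ⋅ conj(h₁ P_z + h₂) = 0` on `ℂ`, then `h₁` vanishes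
somewhere. -/
theorem stmt11 (μ : ℝ) (hμ : μ ≠ 0) (c : ℕ → ℕ → ℂ) (N : ℕ) (P : ℂ → ℝ) (Pz : ℂ → ℂ)
    (hsym : ∀ j q, c j q = conj (c q j))
    (hharm : ∀ j q, j = 0 ∨ q = 0 → c j q = 0)
    (hsupp : ∀ j q, N < j ∨ N < q → c j q = 0)
    (hP : ∀ z : ℂ, (P z : ℂ) = ∑ j ∈ Finset.range (N + 1), ∑ q ∈ Finset.range (N + 1),
      c j q * z ^ j * (conj z) ^ q)
    (hPz : ∀ z : ℂ, Pz z = ∑ j ∈ Finset.range (N + 1), ∑ q ∈ Finset.range (N + 1),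
      (j : ℂ) * c j q * z ^ (j - 1) * (conj z) ^ q)
    (hPne : ∃ z : ℂ, P z ≠ 0)
    (h₁ h₂ : ℂ → ℂ) (hh₁ : Differentiable ℂ h₁) (hh₂ : Differentiable ℂ h₂)
    (heq : ∀ z : ℂ, (h₁ z * Pz z + h₂ z) +
      Complex.exp (-2 * Complex.I * μ * P z) * conj (h₁ z * Pz z + h₂ z) = 0) :
    ∃ z : ℂ, h₁ z = 0 :=
  stmt11_general μ hμ c N P Pz hharm hP hPz hPne h₁ h₂ hh₁ hh₂ heq
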